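/- Without loss of generality for the law of excluded middle: letting x denote the fixed variable var 0, if ∅ ⊢ α ∨ ¬α holds for every formula α such that x NotFreeIn α, then ∅ ⊢ α ∨ ¬α holds for every formula α. -/

import Mathlib

/-- Variables, indexed by natural numbers. -/
structure FOVar where
  idx : ℕ
deriving DecidableEq

/-- Function symbols: an index and an arity. -/
structure FOFunc where
  idx : ℕ
  arity : ℕ
deriving DecidableEq

/-- Relation symbols: an index and an arity. -/
structure FORel where
  idx : ℕ
  arity : ℕ
deriving DecidableEq

/-- Length-indexed vectors. -/
inductive Vec (A : Type) : ℕ → Type where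
  | nil : Vec A 0
  | cons : ∀ {n}, A → Vec A n → Vec A (n + 1)

/-- A predicate holds on every element of a vector. -/
inductive Vec.All {A : Type} (P : A → Prop) : ∀ {n}, Vec A n → Prop where
  | nil : Vec.All P Vec.nil
  | cons : ∀ {n x} {xs : Vec A n}, P x → Vec.All P xs → Vec.All P (Vec.cons x xs)

/-- First-order terms. -/
inductive Term : Type where
  | varterm : FOVar → Term
  | functerm : (f : FOFunc) → Vec Term f.arity → Term

/-- First-order formulas. -/
inductive Formula : Type where
  | atom : (r : FORel) → Vec Term r.arity → Formula
  | imp : Formula → Formula → Formula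
  | and : Formula → Formula → Formula
  | or : Formula → Formula → Formula
  | all : FOVar → Formula → Formula
  | ex : FOVar → Formula → Formula

/-- The variable x does not occur in a term. -/
inductive NotInTerm (x : FOVar) : Term → Prop where
  | varterm : ∀ {y}, x ≠ y → NotInTerm x (Term.varterm y)
  | functerm : ∀ {f} {us : Vec Term f.arity},
      Vec.All (NotInTerm x) us → NotInTerm x (Term.functerm f us)

/-- The variable x does not occur in any term of a vector. -/
def NotInTerms {n : ℕ} (x : FOVar) (ts : Vec Term n) : Prop :=
  Vec.All (NotInTerm x) ts

/-- The variable x is not free in a formula. -/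
inductive NotFreeIn : FOVar → Formula → Prop where
  | atom : ∀ {x r} {ts : Vec Term r.arity},
      NotInTerms x ts → NotFreeIn x (Formula.atom r ts)
  | imp : ∀ {x α β}, NotFreeIn x α → NotFreeIn x β → NotFreeIn x (Formula.imp α β)
  | and : ∀ {x α β}, NotFreeIn x α → NotFreeIn x β → NotFreeIn x (Formula.and α β)
  | or : ∀ {x α β}, NotFreeIn x α → NotFreeIn x β → NotFreeIn x (Formula.or α β)
  | all_self : ∀ x α, NotFreeIn x (Formula.all x α)
  | ex_self : ∀ x α, NotFreeIn x (Formula.ex x α)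
  | all : ∀ {x α} (y : FOVar), NotFreeIn x α → NotFreeIn x (Formula.all y α)
  | ex : ∀ {x α} (y : FOVar), NotFreeIn x α → NotFreeIn x (Formula.ex y α)

mutual
/-- ⟨u⟩[x/t]≡v : substituting t for x in the term u yields v. -/
inductive TermSub : Term → FOVar → Term → Term → Prop where
  | var_eq : ∀ {x t}, TermSub (Term.varterm x) x t t
  | var_ne : ∀ {x t y}, x ≠ y → TermSub (Term.varterm y) x t (Term.varterm y)
  | functerm : ∀ {x t f} {us vs : Vec Term f.arity},
      TermsSub us x t vs → TermSub (Term.functerm f us) x t (Term.functerm f vs)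

/-- [us][x/t]≡vs : componentwise substitution in vectors of terms. -/
inductive TermsSub : ∀ {n}, Vec Term n → FOVar → Term → Vec Term n → Prop where
  | nil : ∀ {x t}, TermsSub Vec.nil x t Vec.nil
  | cons : ∀ {x t u v n} {us vs : Vec Term n},
      TermSub u x t v → TermsSub us x t vs →
      TermsSub (Vec.cons u us) x t (Vec.cons v vs)
end

/-- α[x/t]≡β : substituting t for all free occurrences of x in α yields β. -/
inductive FormulaSub : Formula → FOVar → Term → Formula → Prop where
  | ident : ∀ α x, FormulaSub α x (Term.varterm x) α
  | notfree : ∀ {α x t}, NotFreeIn x α → FormulaSub α x t α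
  | atom : ∀ {x t} (r : FORel) {us vs : Vec Term r.arity},
      TermsSub us x t vs → FormulaSub (Formula.atom r us) x t (Formula.atom r vs)
  | imp : ∀ {α α' β β' x t}, FormulaSub α x t α' → FormulaSub β x t β' →
      FormulaSub (Formula.imp α β) x t (Formula.imp α' β')
  | and : ∀ {α α' β β' x t}, FormulaSub α x t α' → FormulaSub β x t β' →
      FormulaSub (Formula.and α β) x t (Formula.and α' β')
  | or : ∀ {α α' β β' x t}, FormulaSub α x t α' → FormulaSub β x t β' →
      FormulaSub (Formula.or α β) x t (Formula.or α' β')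
  | all_self : ∀ {t} x α, FormulaSub (Formula.all x α) x t (Formula.all x α)
  | ex_self : ∀ {t} x α, FormulaSub (Formula.ex x α) x t (Formula.ex x α)
  | all : ∀ {α β x y t}, x ≠ y → NotInTerm y t → FormulaSub α x t β →
      FormulaSub (Formula.all y α) x t (Formula.all y β)
  | ex : ∀ {α β x y t}, x ≠ y → NotInTerm y t → FormulaSub α x t β →
      FormulaSub (Formula.ex y α) x t (Formula.ex y β)

/-- The term t is free for the variable x in a formula. -/
inductive FreeFor (t : Term) (x : FOVar) : Formula → Prop where
  | notfree : ∀ {α}, NotFreeIn x α → FreeFor t x α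
  | atom : ∀ r us, FreeFor t x (Formula.atom r us)
  | imp : ∀ {α β}, FreeFor t x α → FreeFor t x β → FreeFor t x (Formula.imp α β)
  | and : ∀ {α β}, FreeFor t x α → FreeFor t x β → FreeFor t x (Formula.and α β)
  | or : ∀ {α β}, FreeFor t x α → FreeFor t x β → FreeFor t x (Formula.or α β)
  | all_self : ∀ α, FreeFor t x (Formula.all x α)
  | ex_self : ∀ α, FreeFor t x (Formula.ex x α)
  | all : ∀ {α y}, NotInTerm y t → FreeFor t x α → FreeFor t x (Formula.all y α)
  | ex : ∀ {α y}, NotInTerm y t → FreeFor t x α → FreeFor t x (Formula.ex y α)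

/-- The variable x appears nowhere (free or bound) in a formula. -/
inductive FreshIn (x : FOVar) : Formula → Prop where
  | atom : ∀ {r} {ts : Vec Term r.arity}, NotInTerms x ts → FreshIn x (Formula.atom r ts)
  | imp : ∀ {α β}, FreshIn x α → FreshIn x β → FreshIn x (Formula.imp α β)
  | and : ∀ {α β}, FreshIn x α → FreshIn x β → FreshIn x (Formula.and α β)
  | or : ∀ {α β}, FreshIn x α → FreshIn x β → FreshIn x (Formula.or α β)
  | all : ∀ {α y}, y ≠ x → FreshIn x α → FreshIn x (Formula.all y α)
  | ex : ∀ {α y}, y ≠ x → FreshIn x α → FreshIn x (Formula.ex y α)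

/-- Formula equivalence: equality up to renaming of bound variables. -/
inductive FormulaEquiv : Formula → Formula → Prop where
  | atom : ∀ r ts, FormulaEquiv (Formula.atom r ts) (Formula.atom r ts)
  | imp : ∀ {α β α' β'}, FormulaEquiv α α' → FormulaEquiv β β' →
      FormulaEquiv (Formula.imp α β) (Formula.imp α' β')
  | and : ∀ {α β α' β'}, FormulaEquiv α α' → FormulaEquiv β β' →
      FormulaEquiv (Formula.and α β) (Formula.and α' β')
  | or : ∀ {α β α' β'}, FormulaEquiv α α' → FormulaEquiv β β' →
      FormulaEquiv (Formula.or α β) (Formula.or α' β')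
  | all : ∀ {α α'} (x : FOVar), FormulaEquiv α α' → FormulaEquiv (Formula.all x α) (Formula.all x α')
  | ex : ∀ {α α'} (x : FOVar), FormulaEquiv α α' → FormulaEquiv (Formula.ex x α) (Formula.ex x α')
  | all_rename : ∀ {α β β' x y}, NotFreeIn y α →
      FormulaSub α x (Term.varterm y) β → FormulaEquiv β β' →
      FormulaEquiv (Formula.all x α) (Formula.all y β')
  | ex_rename : ∀ {α β β' x y}, NotFreeIn y α →
      FormulaSub α x (Term.varterm y) β → FormulaEquiv β β' →
      FormulaEquiv (Formula.ex x α) (Formula.ex y β')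
  | all_rename' : ∀ {α α' β' x y}, FormulaEquiv α α' → NotFreeIn y α' →
      FormulaSub α' x (Term.varterm y) β' →
      FormulaEquiv (Formula.all x α) (Formula.all y β')
  | ex_rename' : ∀ {α α' β' x y}, FormulaEquiv α α' → NotFreeIn y α' →
      FormulaSub α' x (Term.varterm y) β' →
      FormulaEquiv (Formula.ex x α) (Formula.ex y β')

/-- Natural deduction for minimal first-order logic. -/
inductive Deduction : Set Formula → Formula → Prop where
  | assume : ∀ (α : Formula), Deduction {α} α
  | close : ∀ {Γ Δ : Set Formula} {α}, Γ ⊆ Δ → Deduction Γ α → Deduction Δ α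
  | arrowintro : ∀ {Γ β} (α : Formula), Deduction Γ β →
      Deduction (Γ \ {α}) (Formula.imp α β)
  | arrowelim : ∀ {Γ₁ Γ₂ α β}, Deduction Γ₁ (Formula.imp α β) → Deduction Γ₂ α →
      Deduction (Γ₁ ∪ Γ₂) β
  | conjintro : ∀ {Γ₁ Γ₂ α β}, Deduction Γ₁ α → Deduction Γ₂ β →
      Deduction (Γ₁ ∪ Γ₂) (Formula.and α β)
  | conjelim : ∀ {Γ₁ Γ₂ α β γ}, Deduction Γ₁ (Formula.and α β) → Deduction Γ₂ γ →
      Deduction (Γ₁ ∪ (Γ₂ \ {α, β})) γ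
  | disjintro1 : ∀ {Γ α} (β : Formula), Deduction Γ α → Deduction Γ (Formula.or α β)
  | disjintro2 : ∀ {Γ β} (α : Formula), Deduction Γ β → Deduction Γ (Formula.or α β)
  | disjelim : ∀ {Γ₁ Γ₂ Γ₃ α β γ}, Deduction Γ₁ (Formula.or α β) →
      Deduction Γ₂ γ → Deduction Γ₃ γ →
      Deduction (Γ₁ ∪ (Γ₂ \ {α}) ∪ (Γ₃ \ {β})) γ
  | univintro : ∀ {Γ α} (x : FOVar), (∀ γ ∈ Γ, NotFreeIn x γ) →
      Deduction Γ α → Deduction Γ (Formula.all x α)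
  | univelim : ∀ {Γ α x β} (t : Term), FormulaSub α x t β →
      Deduction Γ (Formula.all x α) → Deduction Γ β
  | existintro : ∀ {Γ α β} (t : Term) (x : FOVar), FormulaSub α x t β →
      Deduction Γ β → Deduction Γ (Formula.ex x α)
  | existelim : ∀ {Γ₁ Γ₂ α β x}, NotFreeIn x β → (∀ γ ∈ Γ₂ \ {α}, NotFreeIn x γ) →
      Deduction Γ₁ (Formula.ex x α) → Deduction Γ₂ β →
      Deduction (Γ₁ ∪ (Γ₂ \ {α})) β

/-- ⊥: the atom of a fixed nullary relation symbol. -/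
def Formula.bot : Formula := Formula.atom ⟨0, 0⟩ Vec.nil

/-- ¬α is α ⇒ ⊥. -/
def Formula.neg (α : Formula) : Formula := Formula.imp α Formula.bot

/-! Rename the variable `x` in `α` to a variable `y` that does not occur in `α` at
all. The result `β` does not contain `x` free, so `β ∨ ¬β` is provable; since it depends on no
assumptions it may be generalised over `y` and then instantiated at `x`. Because `y` was fresh,
substituting `x` back for `y` in `β` gives exactly `α`. -/

open Filter

namespace Vec

variable {A : Type}

theorem All.of_forall {P : A → Prop} (h : ∀ a, P a) : ∀ {n} (v : Vec A n), Vec.All P v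
  | _, .nil => .nil
  | _, .cons a v => .cons (h a) (All.of_forall h v)

theorem eventually_all {ι : Type*} {l : Filter ι} {P : ι → A → Prop} {n : ℕ} {v : Vec A n}
    (h : Vec.All (fun a => ∀ᶠ i in l, P i a) v) : ∀ᶠ i in l, Vec.All (P i) v := by
  induction h with
  | nil => exact .of_forall fun _ => .nil
  | cons ha _ ih => exact (ha.and ih).mono fun _ h => .cons h.1 h.2

end Vec

theorem FOVar.mk_ne_of_ne {y : FOVar} {n : ℕ} (h : n ≠ y.idx) : FOVar.mk n ≠ y :=
  fun hy => h (congrArg FOVar.idx hy)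

theorem Term.eventually_notInTerm (u : Term) : ∀ᶠ n in atTop, NotInTerm ⟨n⟩ u := by
  induction u using Term.rec
    (motive_2 := fun _ us => Vec.All (fun u => ∀ᶠ n in atTop, NotInTerm ⟨n⟩ u) us) with
  | varterm y => exact (eventually_ne_atTop y.idx).mono fun _ h => .varterm (FOVar.mk_ne_of_ne h)
  | functerm _ _ ih => exact (Vec.eventually_all ih).mono fun _ => .functerm
  | nil => exact .nil
  | cons _ _ hu hus => exact .cons hu hus

theorem eventually_notInTerms {k : ℕ} (us : Vec Term k) :
    ∀ᶠ n in atTop, NotInTerms ⟨n⟩ us :=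
  Vec.eventually_all (Vec.All.of_forall Term.eventually_notInTerm us)

theorem Formula.eventually_freshIn (α : Formula) : ∀ᶠ n in atTop, FreshIn ⟨n⟩ α := by
  induction α with
  | atom _ ts => exact (eventually_notInTerms ts).mono fun _ => .atom
  | imp _ _ ha hb => exact (ha.and hb).mono fun _ h => .imp h.1 h.2
  | and _ _ ha hb => exact (ha.and hb).mono fun _ h => .and h.1 h.2
  | or _ _ ha hb => exact (ha.and hb).mono fun _ h => .or h.1 h.2
  | all y _ ha =>
    exact ((eventually_ne_atTop y.idx).and ha).mono fun _ h =>
      .all (FOVar.mk_ne_of_ne h.1).symm h.2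
  | ex y _ ha =>
    exact ((eventually_ne_atTop y.idx).and ha).mono fun _ h =>
      .ex (FOVar.mk_ne_of_ne h.1).symm h.2

theorem FreshIn.notFreeIn {x : FOVar} {α : Formula} (h : FreshIn x α) : NotFreeIn x α := by
  induction h with
  | atom h => exact .atom h
  | imp _ _ ha hb => exact .imp ha hb
  | and _ _ ha hb => exact .and ha hb
  | or _ _ ha hb => exact .or ha hb
  | all _ _ ih => exact .all _ ih
  | ex _ _ ih => exact .ex _ ih

section Rename

variable {x y : FOVar}

theorem NotInTerms.exists_rename_of_all {k : ℕ} {us : Vec Term k}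
    (hus : Vec.All
      (fun u => NotInTerm y u → ∃ v, TermSub v y (.varterm x) u ∧ NotInTerm x v) us)
    (h : NotInTerms y us) : ∃ vs, TermsSub vs y (.varterm x) us ∧ NotInTerms x vs := by
  induction hus with
  | nil => exact ⟨.nil, .nil, .nil⟩
  | cons hu _ ih =>
    obtain _ | ⟨hyu, hyus⟩ := h
    obtain ⟨v, hv, hxv⟩ := hu hyu
    obtain ⟨vs, hvs, hxvs⟩ := ih hyus
    exact ⟨.cons v vs, .cons hv hvs, .cons hxv hxvs⟩

theorem NotInTerm.exists_rename (hxy : x ≠ y) {u : Term} (h : NotInTerm y u) :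
    ∃ v, TermSub v y (.varterm x) u ∧ NotInTerm x v := by
  induction u using Term.rec (motive_2 := fun _ us => Vec.All
      (fun u => NotInTerm y u → ∃ v, TermSub v y (.varterm x) u ∧ NotInTerm x v) us) with
  | varterm z =>
    obtain ⟨hyz⟩ | _ := h
    by_cases hxz : x = z
    · subst hxz
      exact ⟨.varterm y, .var_eq, .varterm hxy⟩
    · exact ⟨.varterm z, .var_ne hyz, .varterm hxz⟩
  | functerm f us ih =>
    obtain _ | ⟨hyus⟩ := h
    obtain ⟨vs, hvs, hxvs⟩ := NotInTerms.exists_rename_of_all ih hyus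
    exact ⟨.functerm f vs, .functerm hvs, .functerm hxvs⟩
  | nil => exact .nil
  | cons _ _ hu hus => exact .cons hu hus

theorem NotInTerms.exists_rename (hxy : x ≠ y) {k : ℕ} {us : Vec Term k} (h : NotInTerms y us) :
    ∃ vs, TermsSub vs y (.varterm x) us ∧ NotInTerms x vs :=
  exists_rename_of_all (Vec.All.of_forall (fun _ => NotInTerm.exists_rename hxy) us) h

theorem FreshIn.exists_rename (hxy : x ≠ y) {α : Formula} (h : FreshIn y α) :
    ∃ β, FormulaSub β y (.varterm x) α ∧ NotFreeIn x β := by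
  induction h with
  | @atom r _ h =>
    obtain ⟨vs, hvs, hxvs⟩ := NotInTerms.exists_rename hxy h
    exact ⟨.atom r vs, .atom r hvs, .atom hxvs⟩
  | imp _ _ iha ihb =>
    obtain ⟨a, ha, hxa⟩ := iha
    obtain ⟨b, hb, hxb⟩ := ihb
    exact ⟨.imp a b, .imp ha hb, .imp hxa hxb⟩
  | and _ _ iha ihb =>
    obtain ⟨a, ha, hxa⟩ := iha
    obtain ⟨b, hb, hxb⟩ := ihb
    exact ⟨.and a b, .and ha hb, .and hxa hxb⟩
  | or _ _ iha ihb =>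
    obtain ⟨a, ha, hxa⟩ := iha
    obtain ⟨b, hb, hxb⟩ := ihb
    exact ⟨.or a b, .or ha hb, .or hxa hxb⟩
  | @all α z hzy hα ih =>
    by_cases hxz : x = z
    · subst hxz
      exact ⟨.all x α, .notfree (.all x hα.notFreeIn), .all_self x α⟩
    · obtain ⟨β, hβ, hxβ⟩ := ih
      exact ⟨.all z β, .all hzy.symm (.varterm (Ne.symm hxz)) hβ, .all z hxβ⟩
  | @ex α z hzy hα ih =>
    by_cases hxz : x = z
    · subst hxz
      exact ⟨.ex x α, .notfree (.ex x hα.notFreeIn), .ex_self x α⟩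
    · obtain ⟨β, hβ, hxβ⟩ := ih
      exact ⟨.ex z β, .ex hzy.symm (.varterm (Ne.symm hxz)) hβ, .ex z hxβ⟩

end Rename

theorem Formula.notFreeIn_bot (x : FOVar) : NotFreeIn x Formula.bot :=
  .atom .nil

theorem FormulaSub.neg {α β : Formula} {x : FOVar} {t : Term} (h : FormulaSub α x t β) :
    FormulaSub α.neg x t β.neg :=
  .imp h (.notfree (Formula.notFreeIn_bot x))

theorem Deduction.subst {Γ : Set Formula} {α β : Formula} {x : FOVar} {t : Term}
    (hΓ : ∀ γ ∈ Γ, NotFreeIn x γ) (h : Deduction Γ α) (hs : FormulaSub α x t β) :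
    Deduction Γ β :=
  .univelim t hs (.univintro x hΓ h)

/-- Without loss of generality for the law of excluded middle. -/
theorem wlog_lem
    (hnf : ∀ α : Formula, NotFreeIn (FOVar.mk 0) α →
      Deduction ∅ (Formula.or α (Formula.neg α))) :
    ∀ α : Formula, Deduction ∅ (Formula.or α (Formula.neg α)) := by
  intro α
  obtain ⟨n, hfresh, hn⟩ := ((Formula.eventually_freshIn α).and (eventually_gt_atTop 0)).exists
  obtain ⟨β, hβ, hxβ⟩ := hfresh.exists_rename (FOVar.mk_ne_of_ne hn.ne)
  exact (hnf β hxβ).subst (fun _ h => absurd h (Set.notMem_empty _)) (hβ.or hβ.neg)
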